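/- arXiv:1207.6331 — 4 statements merged into one kernel-verified Lean document; each statement's English description precedes it below -/
import Mathlib

section
/- Every face F of an n-box B = I₁ × ⋯ × Iₙ (product of nondegenerate compact intervals) is a set of the form {x ∈ B : xᵢ = aᵢ} or {x ∈ B : xᵢ = bᵢ} for some coordinate i, where Iᵢ = [aᵢ, bᵢ]; if all faces of B are listed with the induced orientation (F⁺ᵢ gets (−1)^{i+1}·o and F⁻ᵢ gets (−1)^i·o, where o is the orientation of B), then every (n−2)-dimensional sub-box x contained in exactly two faces of B is an oriented sub-face of one face with one orientation and of the other face with the opposite orientation. -/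
open Set

/-- An oriented box in `ℝⁿ`: a product of (possibly degenerate) compact intervals,
together with an orientation (`true` = `+1`, `false` = `-1`). -/
structure OBox (n : ℕ) where
  lower : Fin n → ℝ
  upper : Fin n → ℝ
  le : ∀ i, lower i ≤ upper i
  orient : Bool

namespace OBox

variable {n : ℕ}

/-- The set of points of the box. -/
def toSet (B : OBox n) : Set (Fin n → ℝ) :=
  {x | ∀ i, x i ∈ Set.Icc (B.lower i) (B.upper i)}

/-- The dimension of a box: the number of nondegenerate coordinate intervals. -/
noncomputable def dim (B : OBox n) : ℕ :=
  (Finset.univ.filter (fun i => B.lower i < B.upper i)).card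

/-- The diameter of a box: the width of its widest component interval. -/
noncomputable def diam (B : OBox n) : ℝ := ⨆ i, (B.upper i - B.lower i)

/-- The same box with reversed orientation. -/
def neg (B : OBox n) : OBox n := ⟨B.lower, B.upper, B.le, !B.orient⟩

/-- The orientation of the box as an integer `±1`. -/
def sign (B : OBox n) : ℤ := if B.orient then 1 else -1

/-- The intersection of the boxes `B` and `C` is empty or has dimension at most `k`. -/
def InterDimLE (B C : OBox n) (k : ℕ) : Prop :=
  (¬ ∀ i, max (B.lower i) (C.lower i) ≤ min (B.upper i) (C.upper i)) ∨
  (Finset.univ.filter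
      (fun i => max (B.lower i) (C.lower i) < min (B.upper i) (C.upper i))).card ≤ k

/-- `F` is an oriented sub-box of `G`: same dimension, same orientation, contained in it. -/
def OSubBox (F G : OBox n) : Prop :=
  F.toSet ⊆ G.toSet ∧ F.dim = G.dim ∧ F.orient = G.orient

/-- The (0-based) rank of the coordinate `j` among the nondegenerate coordinates of `B`. -/
noncomputable def faceRank (B : OBox n) (j : Fin n) : ℕ :=
  ((Finset.univ.filter (fun i => B.lower i < B.upper i)).filter (fun i => i < j)).card

/-- The induced orientation of the face of `B` in coordinate `j`, on the upper (`s = true`)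
or lower (`s = false`) side: the upper face `Fᵢ⁺` gets `(-1)^(i+1)·o` and the lower face
`Fᵢ⁻` gets `(-1)^i·o`, where `i` is the 1-based rank of `j` among nondegenerate coordinates. -/
noncomputable def faceOrient (B : OBox n) (j : Fin n) (s : Bool) : Bool :=
  Bool.xor B.orient (Bool.xor s (faceRank B j % 2 == 0))

/-- The oriented face of `B` fixing coordinate `j` at its upper (`s = true`) or lower
(`s = false`) endpoint, with the induced orientation. -/
noncomputable def face (B : OBox n) (j : Fin n) (s : Bool) : OBox n where
  lower := fun i => if s ∧ i = j then B.upper j else B.lower i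
  upper := fun i => if ¬(s : Prop) ∧ i = j then B.lower j else B.upper i
  le := by
    intro i
    by_cases hs : s = true <;> by_cases h : i = j <;>
      simp [hs, h, B.le i]
  orient := faceOrient B j s

/-- `F` is an oriented face of `B`. -/
def IsOrientedFace (F B : OBox n) : Prop :=
  ∃ j s, B.lower j < B.upper j ∧ F = face B j s

/-- `F` is an oriented sub-face of `B`: an oriented sub-box of an oriented face. -/
def IsOSubFace (F B : OBox n) : Prop :=
  ∃ G, IsOrientedFace G B ∧ OSubBox F G

/-- `F` is a (not necessarily oriented) sub-face of `B`. -/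
def IsSubFace (F B : OBox n) : Prop :=
  ∃ j s, B.lower j < B.upper j ∧ F.toSet ⊆ (face B j s).toSet ∧ F.dim + 1 = B.dim

end OBox

/-- The union of the points of a set of boxes: `|Ω|`. -/
def unionSet {n : ℕ} (Ω : Set (OBox n)) : Set (Fin n → ℝ) := ⋃ B ∈ Ω, B.toSet

/-- An oriented cubical set of dimension `d` (Definition 4): a finite set of oriented
`d`-boxes with pairwise intersections of dimension at most `d-1`, such that whenever two
boxes share a `(d-1)`-dimensional box, the orientations induced on it as a sub-face of
the two boxes are opposite. -/
structure IsOCS {n : ℕ} (d : ℕ) (Ω : Set (OBox n)) : Prop where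
  finite : Ω.Finite
  dims : ∀ B ∈ Ω, B.dim = d
  inter : ∀ B ∈ Ω, ∀ C ∈ Ω, B ≠ C → OBox.InterDimLE B C (d - 1)
  compat : ∀ B ∈ Ω, ∀ C ∈ Ω, B ≠ C → ∀ F : OBox n,
    F.toSet = B.toSet ∩ C.toSet → F.dim + 1 = d →
    (OBox.IsOSubFace F B → OBox.IsOSubFace F.neg C)

/-- Conditions 1 and 2 of Definition 5 for a candidate oriented boundary `S` of `Ω`. -/
structure IsPreBoundary {n : ℕ} (d : ℕ) (Ω : Set (OBox n)) (S : Set (OBox n)) : Prop where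
  dims : ∀ F ∈ S, F.dim + 1 = d
  inter : ∀ F ∈ S, ∀ G ∈ S, F ≠ G → OBox.InterDimLE F G (d - 2)
  unique : ∀ F ∈ S, ∀ F' : OBox n, OBox.OSubBox F' F →
    ∃! B, B ∈ Ω ∧ OBox.IsOSubFace F' B

/-- `S` is an oriented boundary of the oriented cubical set `Ω` (Definition 5):
it satisfies the two boundary conditions and is maximal with this property. -/
def IsOrientedBoundary {n : ℕ} (d : ℕ) (Ω S : Set (OBox n)) : Prop :=
  IsPreBoundary d Ω S ∧ ∀ F, F ∉ S → ¬ IsPreBoundary d Ω (insert F S)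

/-- `SV` is a sign covering of `S` with respect to `f`: nonzero entries of the sign
vectors certify constant signs of the corresponding components of `f`. -/
def IsSignCovering {n d : ℕ} (SV : OBox n → Fin d → SignType)
    (S : Set (OBox n)) (f : (Fin n → ℝ) → Fin d → ℝ) : Prop :=
  ∀ a ∈ S, ∀ i,
    (SV a i = SignType.pos → ∀ x ∈ a.toSet, 0 < f x i) ∧
    (SV a i = SignType.neg → ∀ x ∈ a.toSet, f x i < 0)

/-- A sign covering is sufficient if every sign vector has a nonzero entry. -/
def IsSufficient {n d : ℕ} (SV : OBox n → Fin d → SignType) (S : Set (OBox n)) : Prop :=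
  ∀ a ∈ S, ∃ i, SV a i ≠ 0

/-- The sign of a real number as an integer. -/
noncomputable def sgn (t : ℝ) : ℤ := if 0 < t then 1 else if t < 0 then -1 else 0

/-- `boolSign true = +`, `boolSign false = -`. -/
def boolSign (b : Bool) : SignType := if b then SignType.pos else SignType.neg

/-- The Brouwer topological degree on `ℝⁿ`, characterized axiomatically by normalization,
the solution property, homotopy invariance, additivity, and local constancy in the
target point on connected components of the complement of `f(∂Ω)`. -/
structure BrouwerDegree (n : ℕ) where
  deg : ((Fin n → ℝ) → (Fin n → ℝ)) → Set (Fin n → ℝ) → (Fin n → ℝ) → ℤ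
  normalization : ∀ (Ω : Set (Fin n → ℝ)) (p : Fin n → ℝ),
    IsOpen Ω → Bornology.IsBounded Ω → p ∉ frontier Ω →
    (deg id Ω p = 1 ↔ p ∈ Ω)
  solution : ∀ (f : (Fin n → ℝ) → (Fin n → ℝ)) (Ω : Set (Fin n → ℝ)) (p : Fin n → ℝ),
    IsOpen Ω → Bornology.IsBounded Ω → ContinuousOn f (closure Ω) →
    p ∉ f '' (frontier Ω) → deg f Ω p ≠ 0 → ∃ x ∈ Ω, f x = p
  homotopy : ∀ (h : ℝ → (Fin n → ℝ) → (Fin n → ℝ)) (Ω : Set (Fin n → ℝ)) (p : Fin n → ℝ),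
    IsOpen Ω → Bornology.IsBounded Ω →
    ContinuousOn (fun q : ℝ × (Fin n → ℝ) => h q.1 q.2) (Set.Icc (0:ℝ) 1 ×ˢ closure Ω) →
    (∀ t ∈ Set.Icc (0:ℝ) 1, p ∉ h t '' (frontier Ω)) →
    deg (h 0) Ω p = deg (h 1) Ω p
  additivity : ∀ (f : (Fin n → ℝ) → (Fin n → ℝ)) (Ω Ω₁ Ω₂ : Set (Fin n → ℝ)) (p : Fin n → ℝ),
    IsOpen Ω → Bornology.IsBounded Ω → IsOpen Ω₁ → IsOpen Ω₂ →
    Ω₁ ⊆ Ω → Ω₂ ⊆ Ω → Disjoint Ω₁ Ω₂ → ContinuousOn f (closure Ω) →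
    p ∉ f '' (closure Ω \ (Ω₁ ∪ Ω₂)) →
    deg f Ω p = deg f Ω₁ p + deg f Ω₂ p
  locConst : ∀ (f : (Fin n → ℝ) → (Fin n → ℝ)) (Ω : Set (Fin n → ℝ)) (p q : Fin n → ℝ),
    IsOpen Ω → Bornology.IsBounded Ω → ContinuousOn f (closure Ω) →
    ∀ C : Set (Fin n → ℝ), IsConnected C → C ⊆ (f '' (frontier Ω))ᶜ →
    p ∈ C → q ∈ C → deg f Ω p = deg f Ω q

/-- The one-dimensional Brouwer degree on `ℝ`, characterized by the same axioms. -/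
structure BrouwerDegree1 where
  deg : (ℝ → ℝ) → Set ℝ → ℝ → ℤ
  normalization : ∀ (Ω : Set ℝ) (p : ℝ),
    IsOpen Ω → Bornology.IsBounded Ω → p ∉ frontier Ω →
    (deg id Ω p = 1 ↔ p ∈ Ω)
  solution : ∀ (f : ℝ → ℝ) (Ω : Set ℝ) (p : ℝ),
    IsOpen Ω → Bornology.IsBounded Ω → ContinuousOn f (closure Ω) →
    p ∉ f '' (frontier Ω) → deg f Ω p ≠ 0 → ∃ x ∈ Ω, f x = p
  homotopy : ∀ (h : ℝ → ℝ → ℝ) (Ω : Set ℝ) (p : ℝ),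
    IsOpen Ω → Bornology.IsBounded Ω →
    ContinuousOn (fun q : ℝ × ℝ => h q.1 q.2) (Set.Icc (0:ℝ) 1 ×ˢ closure Ω) →
    (∀ t ∈ Set.Icc (0:ℝ) 1, p ∉ h t '' (frontier Ω)) →
    deg (h 0) Ω p = deg (h 1) Ω p
  additivity : ∀ (f : ℝ → ℝ) (Ω Ω₁ Ω₂ : Set ℝ) (p : ℝ),
    IsOpen Ω → Bornology.IsBounded Ω → IsOpen Ω₁ → IsOpen Ω₂ →
    Ω₁ ⊆ Ω → Ω₂ ⊆ Ω → Disjoint Ω₁ Ω₂ → ContinuousOn f (closure Ω) →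
    p ∉ f '' (closure Ω \ (Ω₁ ∪ Ω₂)) →
    deg f Ω p = deg f Ω₁ p + deg f Ω₂ p
  locConst : ∀ (f : ℝ → ℝ) (Ω : Set ℝ) (p q : ℝ),
    IsOpen Ω → Bornology.IsBounded Ω → ContinuousOn f (closure Ω) →
    ∀ C : Set ℝ, IsConnected C → C ⊆ (f '' (frontier Ω))ᶜ →
    p ∈ C → q ∈ C → deg f Ω p = deg f Ω q

/-- The topological degree on oriented cubical sets embedded in `ℝⁿ` (of every
dimension `d`), satisfying the degree axioms: the one-dimensional sign formula,
homotopy invariance, the solution property, and additivity. -/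
structure CubicalDegree (n : ℕ) where
  deg : (d : ℕ) → Set (OBox n) → ((Fin n → ℝ) → Fin d → ℝ) → ℤ
  one_dim : ∀ (B : OBox n) (f : (Fin n → ℝ) → Fin 1 → ℝ), B.dim = 1 →
    ContinuousOn f B.toSet → f B.lower 0 ≠ 0 → f B.upper 0 ≠ 0 →
    2 * deg 1 {B} f = B.sign * (sgn (f B.upper 0) - sgn (f B.lower 0))
  homotopy : ∀ (d : ℕ) (Ω S : Set (OBox n)) (h : ℝ → (Fin n → ℝ) → Fin d → ℝ),
    IsOCS d Ω → IsOrientedBoundary d Ω S →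
    ContinuousOn (fun q : ℝ × (Fin n → ℝ) => h q.1 q.2) (Set.Icc (0:ℝ) 1 ×ˢ unionSet Ω) →
    (∀ t ∈ Set.Icc (0:ℝ) 1, ∀ x ∈ unionSet S, h t x ≠ 0) →
    deg d Ω (h 0) = deg d Ω (h 1)
  solution : ∀ (d : ℕ) (Ω S : Set (OBox n)) (f : (Fin n → ℝ) → Fin d → ℝ),
    IsOCS d Ω → IsOrientedBoundary d Ω S → ContinuousOn f (unionSet Ω) →
    (∀ x ∈ unionSet S, f x ≠ 0) → deg d Ω f ≠ 0 → ∃ x ∈ unionSet Ω, f x = 0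
  additivity : ∀ (d : ℕ) (Ω₁ Ω₂ S₁ S₂ S : Set (OBox n)) (f : (Fin n → ℝ) → Fin d → ℝ),
    IsOCS d Ω₁ → IsOCS d Ω₂ → IsOCS d (Ω₁ ∪ Ω₂) → Disjoint Ω₁ Ω₂ →
    IsOrientedBoundary d Ω₁ S₁ → IsOrientedBoundary d Ω₂ S₂ →
    IsOrientedBoundary d (Ω₁ ∪ Ω₂) S →
    ContinuousOn f (unionSet (Ω₁ ∪ Ω₂)) →
    (∀ x ∈ unionSet S₁ ∪ unionSet S₂ ∪ unionSet S, f x ≠ 0) →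
    deg d (Ω₁ ∪ Ω₂) f = deg d Ω₁ f + deg d Ω₂ f

/-- The shrunken set `Ω^ε = {x ∈ int|Ω| : dist(x, ∂|Ω|) ≥ ε}`. -/
noncomputable def shrinkSet {d : ℕ} (Ω : Set (OBox d)) (ε : ℝ) : Set (Fin d → ℝ) :=
  {x | x ∈ interior (unionSet Ω) ∧ ε ≤ Metric.infDist x (frontier (unionSet Ω))}

/-!
A face of a face of `B` fixes two coordinates `j ≠ k`, and as a set it is the intersection
of the two faces of `B` fixing them, in either order. The orientations induced along the
two orders differ only through the rank of the later coordinate, which drops by one once the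
earlier coordinate is fixed; so they are opposite (the sign rule behind `∂∂ = 0`).
An `(n-2)`-box lying in two distinct faces cannot lie in two opposite faces of the same
coordinate, which are disjoint, so it sits in such a double face and inherits opposite
orientations from the two faces containing it.
-/

namespace OBox

variable {n : ℕ} {B : OBox n} {i j k : Fin n} {s t : Bool} {x : Fin n → ℝ}

theorem mem_face_toSet :
    x ∈ (face B j s).toSet ↔ x ∈ B.toSet ∧ x j = if s then B.upper j else B.lower j := by
  have hj := B.le j
  simp only [toSet, face, Set.mem_ofPred_eq, Set.mem_Icc]
  constructor
  · intro h
    have hxj := h j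
    refine ⟨fun i => ?_, ?_⟩
    · by_cases hij : i = j
      · subst hij
        cases s <;> simp at hxj <;> constructor <;> linarith
      · simpa [hij] using h i
    · cases s <;> simp at hxj ⊢ <;> linarith
  · rintro ⟨h, hxj⟩ i
    by_cases hij : i = j
    · subst hij
      cases s <;> simp at hxj ⊢ <;> constructor <;> linarith [h i]
    · simpa [hij] using h i

theorem face_false_toSet : (face B j false).toSet = {x ∈ B.toSet | x j = B.lower j} := by
  ext x; simp [mem_face_toSet]

theorem face_true_toSet : (face B j true).toSet = {x ∈ B.toSet | x j = B.upper j} := by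
  ext x; simp [mem_face_toSet]

theorem eq_of_mem_face_of_mem_face (hj : B.lower j < B.upper j)
    (hs : x ∈ (face B j s).toSet) (ht : x ∈ (face B j t).toSet) : s = t := by
  have hxs := (mem_face_toSet.mp hs).2
  have hxt := (mem_face_toSet.mp ht).2
  cases s <;> cases t <;> simp_all [hj.ne, hj.ne']

theorem orient_face : (face B j s).orient = B.faceOrient j s := rfl

theorem face_lower_of_ne (h : i ≠ j) : (face B j s).lower i = B.lower i := by
  simp [face, h]

theorem face_upper_of_ne (h : i ≠ j) : (face B j s).upper i = B.upper i := by
  simp [face, h]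

theorem face_lower_lt_upper_iff :
    (face B j s).lower i < (face B j s).upper i ↔ i ≠ j ∧ B.lower i < B.upper i := by
  by_cases h : i = j
  · subst h
    cases s <;> simp [face]
  · simp [face_lower_of_ne h, face_upper_of_ne h, h]

theorem face_face_toSet (hjk : j ≠ k) :
    (face (face B j s) k t).toSet = (face B j s).toSet ∩ (face B k t).toSet := by
  ext x
  simp only [mem_face_toSet, face_lower_of_ne hjk.symm, face_upper_of_ne hjk.symm,
    Set.mem_inter_iff]
  tauto

noncomputable abbrev nondeg (B : OBox n) : Finset (Fin n) :=
  Finset.univ.filter fun i => B.lower i < B.upper i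

theorem nondeg_face : (face B j s).nondeg = B.nondeg.erase j := by
  ext i
  simp [face_lower_lt_upper_iff]

theorem dim_face (hj : B.lower j < B.upper j) : (face B j s).dim = B.dim - 1 := by
  simp only [dim]
  rw [← nondeg, ← nondeg, nondeg_face, Finset.card_erase_of_mem (by simpa using hj)]

theorem faceRank_face :
    (face B j s).faceRank k = B.faceRank k - if j ∈ B.nondeg ∧ j < k then 1 else 0 := by
  simp only [faceRank]
  rw [← nondeg, ← nondeg, nondeg_face, Finset.filter_erase, Finset.card_erase_eq_ite]
  split_ifs <;> simp_all

theorem mod_two_sub_one_beq {m : ℕ} (hm : 1 ≤ m) : ((m - 1) % 2 == 0) = !(m % 2 == 0) := by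
  rcases Nat.mod_two_eq_zero_or_one m with h | h <;>
    simp [h, show (m - 1) % 2 = 1 - m % 2 by omega]

theorem orient_face_face_of_lt (hj : B.lower j < B.upper j) (hjk : j < k) :
    (face (face B j s) k t).orient = !(face (face B k t) j s).orient := by
  replace hj : j ∈ B.nondeg := by simpa using hj
  have hk : 1 ≤ B.faceRank k :=
    Finset.card_pos.mpr ⟨j, Finset.mem_filter.mpr ⟨hj, hjk⟩⟩
  simp only [orient_face, faceOrient, faceRank_face, hj, hjk,
    not_lt_of_gt hjk, and_self, and_false, if_true, if_false, Nat.sub_zero,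
    mod_two_sub_one_beq hk]
  cases B.orient <;> cases s <;> cases t <;> cases B.faceRank j % 2 == 0 <;>
    cases B.faceRank k % 2 == 0 <;> rfl

theorem orient_face_face (hj : B.lower j < B.upper j) (hk : B.lower k < B.upper k)
    (hjk : j ≠ k) :
    (face (face B j s) k t).orient = !(face (face B k t) j s).orient := by
  rcases hjk.lt_or_gt with h | h
  · exact orient_face_face_of_lt hj h
  · rw [orient_face_face_of_lt hk h, Bool.not_not]

theorem dim_face_face (hj : B.lower j < B.upper j) (hk : B.lower k < B.upper k)
    (hjk : j ≠ k) : (face (face B j s) k t).dim = B.dim - 2 := by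
  rw [dim_face (face_lower_lt_upper_iff.mpr ⟨hjk.symm, hk⟩), dim_face hj]
  omega

theorem dim_eq_of_forall_lt (hB : ∀ i, B.lower i < B.upper i) : B.dim = n := by
  simp [dim, hB]

theorem isOSubFace_of_subset_face {G X : OBox n} (hk : G.lower k < G.upper k)
    (hX : X.toSet ⊆ (face G k t).toSet) (hdim : X.dim = (face G k t).dim) :
    IsOSubFace { X with orient := (face G k t).orient } G :=
  ⟨face G k t, ⟨k, t, hk, rfl⟩, hX, hdim, rfl⟩

end OBox

open OBox in
/-- every face of an `n`-box `B` is of the form `{x ∈ B : xᵢ = aᵢ}` or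
`{x ∈ B : xᵢ = bᵢ}`; moreover every `(n−2)`-dimensional sub-box contained in exactly
two faces of `B` is an oriented sub-face of one face with one orientation and of the
other face with the opposite orientation. -/
theorem stmt4 {n : ℕ} (B : OBox n) (hB : ∀ i, B.lower i < B.upper i) :
    (∀ F : OBox n, OBox.IsOrientedFace F B →
      ∃ i, F.toSet = {x ∈ B.toSet | x i = B.lower i} ∨
        F.toSet = {x ∈ B.toSet | x i = B.upper i}) ∧
    (∀ (X : OBox n) (j k : Fin n) (s t : Bool), (j, s) ≠ (k, t) →
      X.dim + 2 = n →
      X.toSet ⊆ (OBox.face B j s).toSet → X.toSet ⊆ (OBox.face B k t).toSet →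
      (∀ (j' : Fin n) (s' : Bool), X.toSet ⊆ (OBox.face B j' s').toSet →
        (j', s') = (j, s) ∨ (j', s') = (k, t)) →
      ∃ o : Bool, OBox.IsOSubFace { X with orient := o } (OBox.face B j s) ∧
        OBox.IsOSubFace { X with orient := !o } (OBox.face B k t)) := by
  refine ⟨?_, fun X j k s t hne hdim hXj hXk _ => ?_⟩
  · rintro F ⟨j, s, -, rfl⟩
    cases s
    exacts [⟨j, .inl face_false_toSet⟩, ⟨j, .inr face_true_toSet⟩]
  have hjk : j ≠ k := by
    rintro rfl
    have hx : X.lower ∈ X.toSet := fun i => ⟨le_rfl, X.le i⟩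
    exact hne (by rw [eq_of_mem_face_of_mem_face (hB j) (hXj hx) (hXk hx)])
  have hdim_face_face : ∀ {j k : Fin n} {s t : Bool}, j ≠ k →
      X.dim = (face (face B j s) k t).dim := fun hjk => by
    rw [dim_face_face (hB _) (hB _) hjk, dim_eq_of_forall_lt hB]
    omega
  refine ⟨_, isOSubFace_of_subset_face (face_lower_lt_upper_iff.mpr ⟨hjk.symm, hB k⟩)
    ((subset_inter hXj hXk).trans (face_face_toSet hjk).superset) (hdim_face_face hjk), ?_⟩
  rw [orient_face_face (hB j) (hB k) hjk, Bool.not_not]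
  exact isOSubFace_of_subset_face (face_lower_lt_upper_iff.mpr ⟨hjk, hB j⟩)
    ((subset_inter hXk hXj).trans (face_face_toSet hjk.symm).superset) (hdim_face_face hjk.symm)
end

section
/- Let Ω be a d-dimensional oriented cubical set with oriented boundary ∂Ω, f : |Ω| → ℝ^d continuous with 0 ∉ f(|∂Ω|), and SV a sufficient sign covering of ∂Ω with respect to f. Then deg(f, Ω, 0) is uniquely determined by SV: any two continuous functions g, h : |Ω| → ℝ^d for which SV is a sign covering with respect to both satisfy deg(g, Ω, 0) = deg(h, Ω, 0). -/
open Set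

/-! The straight-line homotopy from `g` to `h` never vanishes on `|∂Ω|`: on each boundary box
some component has the sign prescribed by the sufficient sign covering for both `g` and `h`,
hence also for every convex combination of them. Homotopy invariance of the degree then
gives `deg(g, Ω, 0) = deg(h, Ω, 0)`. -/

section

variable {n d : ℕ} {SV : OBox n → Fin d → SignType} {S : Set (OBox n)}

theorem IsSignCovering.lineMap {g h : (Fin n → ℝ) → Fin d → ℝ}
    (hg : IsSignCovering SV S g) (hh : IsSignCovering SV S h) {t : ℝ} (ht : t ∈ Icc 0 1) :
    IsSignCovering SV S (fun x => AffineMap.lineMap (g x) (h x) t) := by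
  intro a ha i
  refine ⟨fun hpos x hx => ?_, fun hneg x hx => ?_⟩ <;>
    dsimp only <;> rw [AffineMap.pi_lineMap_apply]
  · exact (convex_Ioi (0 : ℝ)).lineMap_mem ((hg a ha i).1 hpos x hx) ((hh a ha i).1 hpos x hx) ht
  · exact (convex_Iio (0 : ℝ)).lineMap_mem ((hg a ha i).2 hneg x hx) ((hh a ha i).2 hneg x hx) ht

theorem IsSufficient.ne_zero_of_isSignCovering {f : (Fin n → ℝ) → Fin d → ℝ}
    (hsuf : IsSufficient SV S) (hf : IsSignCovering SV S f) :
    ∀ x ∈ unionSet S, f x ≠ 0 := by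
  intro x hx hfx
  obtain ⟨a, ha, hxa⟩ := mem_iUnion₂.mp hx
  obtain ⟨i, hi⟩ := hsuf a ha
  have hfxi : f x i = 0 := congrFun hfx i
  cases hsv : SV a i with
  | zero => exact hi hsv
  | pos => exact ((hf a ha i).1 hsv x hxa).ne' hfxi
  | neg => exact ((hf a ha i).2 hsv x hxa).ne hfxi

end

theorem stmt8_general {n d : ℕ} (cd : CubicalDegree n) (Ω S : Set (OBox n))
    (hΩ : IsOCS d Ω) (hS : IsOrientedBoundary d Ω S)
    (SV : OBox n → Fin d → SignType) (hsuf : IsSufficient SV S)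
    (g h : (Fin n → ℝ) → Fin d → ℝ)
    (hgc : ContinuousOn g (unionSet Ω)) (hhc : ContinuousOn h (unionSet Ω))
    (hgSV : IsSignCovering SV S g) (hhSV : IsSignCovering SV S h) :
    cd.deg d Ω g = cd.deg d Ω h := by
  have hcont : ContinuousOn (fun q : ℝ × (Fin n → ℝ) => AffineMap.lineMap (g q.2) (h q.2) q.1)
      (Icc 0 1 ×ˢ unionSet Ω) :=
    (hgc.comp continuousOn_snd fun _ hq => hq.2).lineMap
      (hhc.comp continuousOn_snd fun _ hq => hq.2) continuousOn_fst
  have hne : ∀ t ∈ Icc (0 : ℝ) 1, ∀ x ∈ unionSet S, AffineMap.lineMap (g x) (h x) t ≠ 0 :=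
    fun t ht => hsuf.ne_zero_of_isSignCovering (hgSV.lineMap hhSV ht)
  simpa only [AffineMap.lineMap_apply_zero, AffineMap.lineMap_apply_one] using
    cd.homotopy d Ω S (fun t x => AffineMap.lineMap (g x) (h x) t) hΩ hS hcont hne

/-- a sufficient sign covering of `∂Ω` determines the degree uniquely:
any two continuous functions for which it is a sign covering have the same degree. -/
theorem stmt8 {n d : ℕ} (cd : CubicalDegree n) (Ω S : Set (OBox n))
    (hΩ : IsOCS d Ω) (hS : IsOrientedBoundary d Ω S)
    (SV : OBox n → Fin d → SignType) (hsuf : IsSufficient SV S)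
    (g h : (Fin n → ℝ) → Fin d → ℝ)
    (hgc : ContinuousOn g (unionSet Ω)) (hhc : ContinuousOn h (unionSet Ω))
    (hg0 : ∀ x ∈ unionSet S, g x ≠ 0) (hh0 : ∀ x ∈ unionSet S, h x ≠ 0)
    (hgSV : IsSignCovering SV S g) (hhSV : IsSignCovering SV S h) :
    cd.deg d Ω g = cd.deg d Ω h :=
  stmt8_general cd Ω S hΩ hS SV hsuf g h hgc hhc hgSV hhSV
end

section
/- Let f : B → ℝ be continuous on a box B ⊆ ℝⁿ and suppose I(f) is an interval extension of f: for each sub-box K with rational endpoints and positive diameter, I(f)(K) is a closed interval containing f(K), and for every ε > 0 there is δ > 0 such that diam(K) < δ implies diam(I(f)(K)) < ε. Then for every compact subset S ⊆ B on which f is nonvanishing, there exists δ > 0 such that every sub-box K ⊆ B with K ∩ S ≠ ∅ and 0 < diam(K) < δ satisfies 0 ∉ I(f)(K); in particular the sign of f on K is determined by I(f)(K). -/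
open Set

/-- A box has rational endpoints. -/
def ratBox {n : ℕ} (K : OBox n) : Prop :=
  ∀ i, (∃ q : ℚ, K.lower i = (q : ℝ)) ∧ ∃ q : ℚ, K.upper i = (q : ℝ)

/-
A continuous function that does not vanish on a compact set `S` is bounded away from zero there,
say `m ≤ |f|` on `S`. Boxes of diameter below the `δ` that makes interval widths smaller than `m`
then have enclosures that contain a value `f y` with `|f y| ≥ m` and are shorter than `m`, so
they cannot reach `0`.
-/

theorem IsCompact.exists_pos_forall_le_norm {X E : Type*} [TopologicalSpace X]
    [NormedAddCommGroup E] {S : Set X} {f : X → E} (hS : IsCompact S) (hf : ContinuousOn f S)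
    (hf0 : ∀ x ∈ S, f x ≠ 0) : ∃ m > (0:ℝ), ∀ x ∈ S, m ≤ ‖f x‖ := by
  rcases S.eq_empty_or_nonempty with rfl | hSne
  · exact ⟨1, one_pos, by simp⟩
  obtain ⟨x₀, hx₀, hmin⟩ := hS.exists_isMinOn hSne hf.norm
  exact ⟨‖f x₀‖, norm_pos_iff.mpr (hf0 x₀ hx₀), fun x hx => hmin hx⟩

theorem zero_notMem_Icc_of_sub_lt_abs {α : Type*} [AddCommGroup α] [LinearOrder α]
    [IsOrderedAddMonoid α] {a b t : α} (ht : t ∈ Icc a b) (hw : b - a < |t|) :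
    (0:α) ∉ Icc a b := by
  rintro ⟨ha, hb⟩
  have hlo : -(b - a) ≤ t := neg_sub b a ▸ (sub_le_self a hb).trans ht.1
  have hhi : t ≤ b - a := ht.2.trans ((le_sub_self_iff b).mpr ha)
  exact (hw.trans_le (abs_le.mpr ⟨hlo, hhi⟩)).false

theorem pos_or_neg_of_mapsTo_Icc {X α : Type*} [Zero α] [LinearOrder α] {f : X → α}
    {K : Set X} {a b : α} (hK : MapsTo f K (Icc a b)) (h0 : (0:α) ∉ Icc a b) :
    (0 < a ∧ ∀ x ∈ K, 0 < f x) ∨ (b < 0 ∧ ∀ x ∈ K, f x < 0) := by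
  rcases not_and_or.mp h0 with ha | hb
  · have ha : 0 < a := not_le.mp ha
    exact Or.inl ⟨ha, fun x hx => ha.trans_le (hK hx).1⟩
  · have hb : b < 0 := not_le.mp hb
    exact Or.inr ⟨hb, fun x hx => (hK hx).2.trans_lt hb⟩

/-- for an interval extension `I(f) = [Ilo, Ihi]` of a continuous `f`
nonvanishing on a compact `S ⊆ B`, all sufficiently small boxes meeting `S` have
`0 ∉ I(f)(K)`; in particular the sign of `f` on `K` is determined by `I(f)(K)`. -/
theorem stmt13 {n : ℕ} (B : OBox n) (f : (Fin n → ℝ) → ℝ)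
    (hf : ContinuousOn f B.toSet)
    (Ilo Ihi : OBox n → ℝ)
    (hencl : ∀ K : OBox n, K.toSet ⊆ B.toSet → ratBox K → 0 < K.diam →
      ∀ x ∈ K.toSet, f x ∈ Set.Icc (Ilo K) (Ihi K))
    (hconv : ∀ ε > (0:ℝ), ∃ δ > (0:ℝ), ∀ K : OBox n, K.toSet ⊆ B.toSet → ratBox K →
      0 < K.diam → K.diam < δ → Ihi K - Ilo K < ε)
    (S : Set (Fin n → ℝ)) (hScomp : IsCompact S) (hSB : S ⊆ B.toSet)
    (hS0 : ∀ x ∈ S, f x ≠ 0) :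
    ∃ δ > (0:ℝ), ∀ K : OBox n, K.toSet ⊆ B.toSet → ratBox K →
      (K.toSet ∩ S).Nonempty → 0 < K.diam → K.diam < δ →
      (0:ℝ) ∉ Set.Icc (Ilo K) (Ihi K) ∧
      ((0 < Ilo K ∧ ∀ x ∈ K.toSet, 0 < f x) ∨ (Ihi K < 0 ∧ ∀ x ∈ K.toSet, f x < 0)) := by
  obtain ⟨m, hm, hmS⟩ := hScomp.exists_pos_forall_le_norm (hf.mono hSB) hS0
  obtain ⟨δ, hδ, hwidth⟩ := hconv m hm
  refine ⟨δ, hδ, fun K hKB hKrat ⟨y, hyK, hyS⟩ hKpos hKδ => ?_⟩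
  have hencK : MapsTo f K.toSet (Icc (Ilo K) (Ihi K)) := hencl K hKB hKrat hKpos
  have hwidthK : Ihi K - Ilo K < |f y| :=
    (hwidth K hKB hKrat hKpos hKδ).trans_le (Real.norm_eq_abs (f y) ▸ hmS y hyS)
  have h0 : (0:ℝ) ∉ Icc (Ilo K) (Ihi K) := zero_notMem_Icc_of_sub_lt_abs (hencK hyK) hwidthK
  exact ⟨h0, pos_or_neg_of_mapsTo_Icc hencK h0⟩
end

section
/- For the function f : ℝⁿ → ℝⁿ given by f₁ = x₁² − x₂² − ⋯ − xₙ², fⱼ = 2x₁xⱼ for j = 2,…,n, the origin is the unique zero of f in [−1,1]ⁿ, 0 ∉ f(∂[−1,1]ⁿ), and deg(f, (−1,1)ⁿ, 0) = 2 when n is even and 0 when n is odd. -/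
open Set

/-!
The equation `f x = (1/4)e₀` has exactly the two solutions `±(1/2)e₀`, where `Df = ±id`. Local
constancy in the target gives `deg(f, cube, 0) = deg(f, cube, (1/4)e₀)`; additivity splits the cube
along `x₀ = 0`, and on each half the straight-line homotopy from `f` to its linearization at the
solution is admissible, so the degree is `deg id + deg (-id) = 1 + (-1)ⁿ`.

The degree `(-1)ⁿ` of `-id` is computed from the axioms one coordinate at a time: replacing one
coordinate by a fold `s ↦ c - s²` gives a map homotopic to one without zeros, while near its two
zeros the fold is homotopic to the two linear maps of slopes `∓1`, whose degrees therefore cancel.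
-/

namespace BrouwerDegree

variable {n : ℕ} (D : BrouwerDegree n) {f g : (Fin n → ℝ) → (Fin n → ℝ)}
  {Ω W : Set (Fin n → ℝ)} {p : Fin n → ℝ}

theorem deg_eq_zero_of_forall_ne (hΩ : IsOpen Ω) (hb : Bornology.IsBounded Ω)
    (hf : ContinuousOn f (closure Ω)) (h : ∀ x ∈ closure Ω, f x ≠ p) : D.deg f Ω p = 0 := by
  by_contra hd
  obtain ⟨x, hx, hfx⟩ := D.solution f Ω p hΩ hb hf
    (by rintro ⟨x, hx, rfl⟩; exact h x (frontier_subset_closure hx) rfl) hd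
  exact h x (subset_closure hx) hfx

theorem deg_empty : D.deg f ∅ p = 0 :=
  D.deg_eq_zero_of_forall_ne isOpen_empty Bornology.isBounded_empty (by simp) (by simp)

theorem deg_excision (hW : IsOpen W) (hb : Bornology.IsBounded W) (hΩ : IsOpen Ω)
    (hΩW : Ω ⊆ W) (hf : ContinuousOn f (closure W)) (h : ∀ x ∈ closure W, f x = p → x ∈ Ω) :
    D.deg f W p = D.deg f Ω p := by
  rw [D.additivity f W Ω ∅ p hW hb hΩ isOpen_empty hΩW (empty_subset W) (disjoint_empty Ω) hf
    (by rintro ⟨x, ⟨hx, hxΩ⟩, hfx⟩; exact hxΩ (Or.inl (h x hx hfx))), deg_empty, add_zero]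

theorem deg_eq_of_segment_homotopy (hΩ : IsOpen Ω) (hb : Bornology.IsBounded Ω)
    (hf : ContinuousOn f (closure Ω)) (hg : ContinuousOn g (closure Ω))
    (h : ∀ t ∈ Icc (0 : ℝ) 1, ∀ x ∈ closure Ω, (1 - t) • f x + t • g x = p → x ∈ Ω) :
    D.deg f Ω p = D.deg g Ω p := by
  have := D.homotopy (fun t x => (1 - t) • f x + t • g x) Ω p hΩ hb ?_ ?_
  · simpa using this
  · have hsnd : MapsTo Prod.snd (Icc (0 : ℝ) 1 ×ˢ closure Ω) (closure Ω) := fun q hq => hq.2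
    exact ((continuousOn_const.sub continuousOn_fst).smul (hf.comp continuousOn_snd hsnd)).add
      (continuousOn_fst.smul (hg.comp continuousOn_snd hsnd))
  · rintro t ht ⟨x, hx, hfx⟩
    rw [hΩ.frontier_eq] at hx
    exact hx.2 (h t ht x hx.1 hfx)

end BrouwerDegree

section DiagonalAffine

variable {n : ℕ} {σ z p x : Fin n → ℝ}

theorem mul_sub_add_eq_right_iff (hσ : ∀ i, σ i ≠ 0) : σ * (x - z) + p = p ↔ x = z := by
  simp [funext_iff, hσ, sub_eq_zero]

variable (D : BrouwerDegree n) {W : Set (Fin n → ℝ)}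

theorem BrouwerDegree.deg_diagAffine_center_congr (hW : IsOpen W) (hb : Bornology.IsBounded W)
    (hc : Convex ℝ W) (hσ : ∀ i, σ i ≠ 0) {z' : Fin n → ℝ} (hz : z ∈ W) (hz' : z' ∈ W) :
    D.deg (fun x => σ * (x - z) + p) W p = D.deg (fun x => σ * (x - z') + p) W p := by
  refine D.deg_eq_of_segment_homotopy hW hb (by fun_prop) (by fun_prop) fun t ht x _ hx => ?_
  have hline : (1 - t) • (σ * (x - z) + p) + t • (σ * (x - z') + p) =
      σ * (x - ((1 - t) • z + t • z')) + p := by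
    ext i; simp only [Pi.add_apply, Pi.smul_apply, Pi.mul_apply, Pi.sub_apply, smul_eq_mul]; ring
  rw [hline, mul_sub_add_eq_right_iff hσ] at hx
  exact hx ▸ hc hz hz' (by linarith [ht.2]) ht.1 (by ring)

end DiagonalAffine

section FoldedCoordinate

open Function

variable {n : ℕ} (σ p : Fin n → ℝ) (k : Fin n)

def affineWithCoord (φ : ℝ → ℝ) (x : Fin n → ℝ) : Fin n → ℝ :=
  update (σ * (x - p) + p) k (φ (x k))

variable {σ p k}

theorem affineWithCoord_eq_right_iff (hσ : ∀ i ≠ k, σ i ≠ 0) {φ : ℝ → ℝ} {x : Fin n → ℝ} :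
    affineWithCoord σ p k φ x = p ↔ x = update p k (x k) ∧ φ (x k) = p k := by
  simp only [affineWithCoord, update_eq_iff, eq_update_iff, Pi.add_apply, Pi.mul_apply,
    Pi.sub_apply, add_eq_right, mul_eq_zero, sub_eq_zero, true_and]
  constructor
  · rintro ⟨hk, hi⟩
    exact ⟨fun i hik => (hi i hik).resolve_left (hσ i hik), hk⟩
  · rintro ⟨hi, hk⟩
    exact ⟨hk, fun i hik => Or.inr (hi i hik)⟩

theorem affineWithCoord_segment (φ ψ : ℝ → ℝ) (t : ℝ) (x : Fin n → ℝ) :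
    (1 - t) • affineWithCoord σ p k φ x + t • affineWithCoord σ p k ψ x =
      affineWithCoord σ p k (fun s => (1 - t) * φ s + t * ψ s) x := by
  ext i
  by_cases hi : i = k
  · subst hi; simp [affineWithCoord]
  · simp only [affineWithCoord, Pi.add_apply, Pi.smul_apply, update_of_ne hi, smul_eq_mul]; ring

theorem continuous_affineWithCoord {φ : ℝ → ℝ} (hφ : Continuous φ) :
    Continuous (affineWithCoord σ p k φ) :=
  continuous_pi fun i => by
    by_cases hi : i = k
    · subst hi; simp only [affineWithCoord, update_self]; exact hφ.comp (continuous_apply i)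
    · simp only [affineWithCoord, update_of_ne hi]; fun_prop

theorem affineWithCoord_of_affine (c a : ℝ) :
    affineWithCoord σ p k (fun s => c * (s - a) + p k) =
      fun x => update σ k c * (x - update p k a) + p := by
  ext x i
  by_cases hi : i = k
  · subst hi; simp [affineWithCoord]
  · simp [affineWithCoord, update_of_ne hi]

end FoldedCoordinate

section FoldDegree

open Function

variable {n : ℕ} (D : BrouwerDegree n) {W : Set (Fin n → ℝ)} {σ p : Fin n → ℝ} {k : Fin n}
  {r : ℝ}

theorem mem_of_affineWithCoord_eq (hσ : ∀ i ≠ k, σ i ≠ 0)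
    (hr : ∀ s, |s| ≤ r → update p k (p k + s) ∈ W) {φ : ℝ → ℝ} {x : Fin n → ℝ}
    (hx : affineWithCoord σ p k φ x = p) (hxk : |x k - p k| ≤ r) : x ∈ W := by
  rw [((affineWithCoord_eq_right_iff hσ).1 hx).1]
  simpa using hr _ hxk

theorem BrouwerDegree.deg_fold_eq_zero (hW : IsOpen W) (hb : Bornology.IsBounded W)
    (hσ : ∀ i ≠ k, σ i ≠ 0) (hr0 : 0 < r) (hr : ∀ s, |s| ≤ r → update p k (p k + s) ∈ W) :
    D.deg (affineWithCoord σ p k fun s => p k + r ^ 2 - (s - p k) ^ 2) W p = 0 := by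
  rw [D.deg_eq_of_segment_homotopy
    (g := affineWithCoord σ p k fun s => p k - r ^ 2 - (s - p k) ^ 2) hW hb
    (continuous_affineWithCoord (by fun_prop)).continuousOn
    (continuous_affineWithCoord (by fun_prop)).continuousOn ?_]
  · refine D.deg_eq_zero_of_forall_ne hW hb
      (continuous_affineWithCoord (by fun_prop)).continuousOn fun x _ hx => ?_
    have := ((affineWithCoord_eq_right_iff hσ).1 hx).2
    nlinarith [sq_nonneg (x k - p k)]
  · intro t ht x _ hx
    rw [affineWithCoord_segment] at hx
    refine mem_of_affineWithCoord_eq hσ hr hx (abs_le_of_sq_le_sq ?_ hr0.le)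
    have := ((affineWithCoord_eq_right_iff hσ).1 hx).2
    nlinarith [ht.1, ht.2]

theorem BrouwerDegree.deg_fold_inter_half_eq_linearization (hW : IsOpen W)
    (hb : Bornology.IsBounded W) (hσ : ∀ i ≠ k, σ i ≠ 0) (hr0 : 0 < r)
    (hr : ∀ s, |s| ≤ r → update p k (p k + s) ∈ W) {ε : ℝ} (hε : ε = 1 ∨ ε = -1) :
    D.deg (affineWithCoord σ p k fun s => p k + r ^ 2 - (s - p k) ^ 2)
        (W ∩ {x | 0 < ε * (x k - p k)}) p =
      D.deg (fun x => update σ k (-ε) * (x - update p k (p k + ε * r)) + p)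
        (W ∩ {x | 0 < ε * (x k - p k)}) p := by
  have hε2 : ε * ε = 1 := by rcases hε with rfl | rfl <;> norm_num
  rw [← affineWithCoord_of_affine]
  refine D.deg_eq_of_segment_homotopy (hW.inter (isOpen_lt continuous_const (by fun_prop)))
    (hb.subset inter_subset_left) (continuous_affineWithCoord (by fun_prop)).continuousOn
    (continuous_affineWithCoord (by fun_prop)).continuousOn fun t ht x hxcl hx => ?_
  rw [affineWithCoord_segment] at hx
  obtain ⟨hx, hxk⟩ := (affineWithCoord_eq_right_iff hσ).1 hx
  set u := ε * (x k - p k)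
  have hu : 0 ≤ u := closure_lt_subset_le continuous_const (by fun_prop)
    (closure_mono inter_subset_right hxcl)
  have hfactor : (r - u) * ((1 - t) * (r + u) + t) = 0 := by
    linear_combination hxk - (r * t + (1 - t) * (x k - p k) ^ 2) * hε2
  have hpos : 0 < (1 - t) * (r + u) + t := by
    rcases ht.2.lt_or_eq with ht1 | rfl
    · nlinarith [mul_pos (sub_pos.2 ht1) (add_pos_of_pos_of_nonneg hr0 hu), ht.1]
    · norm_num
  have hur : u = r := by linarith [(mul_eq_zero.1 hfactor).resolve_right hpos.ne']
  have hxk' : x k - p k = ε * r := by linear_combination ε * hur - (x k - p k) * hε2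
  refine ⟨?_, by simp only [mem_ofPred_eq]; linarith⟩
  rw [hx, show x k = p k + ε * r by linarith]
  exact hr (ε * r) (by rcases hε with rfl | rfl <;> simp [abs_of_pos hr0])

theorem BrouwerDegree.deg_fold_inter_half (hW : IsOpen W) (hb : Bornology.IsBounded W)
    (hc : Convex ℝ W) (hσ : ∀ i ≠ k, σ i ≠ 0) (hr0 : 0 < r)
    (hr : ∀ s, |s| ≤ r → update p k (p k + s) ∈ W) {ε : ℝ} (hε : ε = 1 ∨ ε = -1) :
    D.deg (affineWithCoord σ p k fun s => p k + r ^ 2 - (s - p k) ^ 2)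
        (W ∩ {x | 0 < ε * (x k - p k)}) p =
      D.deg (fun x => update σ k (-ε) * (x - p) + p) W p := by
  have hσ' : ∀ i, update σ k (-ε) i ≠ 0 := fun i => by
    by_cases hi : i = k
    · subst hi; rcases hε with rfl | rfl <;> simp
    · rw [update_of_ne hi]; exact hσ i hi
  set z := update p k (p k + ε * r)
  have hzW : z ∈ W := hr _ (by rcases hε with rfl | rfl <;> simp [abs_of_pos hr0])
  have hzH : z ∈ W ∩ {x | 0 < ε * (x k - p k)} :=
    ⟨hzW, by rcases hε with rfl | rfl <;> simp [z, hr0]⟩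
  rw [D.deg_fold_inter_half_eq_linearization hW hb hσ hr0 hr hε,
    ← D.deg_diagAffine_center_congr hW hb hc hσ' hzW (by simpa using hr 0 (by simpa using hr0.le))]
  exact (D.deg_excision hW hb (hW.inter (isOpen_lt continuous_const (by fun_prop)))
    inter_subset_left (by fun_prop) fun x _ hx => (mul_sub_add_eq_right_iff hσ').1 hx ▸ hzH).symm

theorem BrouwerDegree.deg_diagAffine_update_neg_one (hW : IsOpen W) (hb : Bornology.IsBounded W)
    (hc : Convex ℝ W) (hσ : ∀ i ≠ k, σ i ≠ 0) (hp : p ∈ W) :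
    D.deg (fun x => update σ k (-1) * (x - p) + p) W p =
      -D.deg (fun x => update σ k 1 * (x - p) + p) W p := by
  obtain ⟨r, hr0, hr⟩ : ∃ r > 0, ∀ s, |s| ≤ r → update p k (p k + s) ∈ W := by
    have hopen : IsOpen ((fun s => update p k (p k + s)) ⁻¹' W) :=
      hW.preimage (continuous_const.update k (continuous_const.add continuous_id))
    obtain ⟨δ, hδ, hball⟩ := Metric.isOpen_iff.1 hopen 0 (by simpa using hp)
    refine ⟨δ / 2, half_pos hδ, fun s hs => hball ?_⟩
    rw [Metric.mem_ball, Real.dist_0_eq_abs]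
    linarith
  have hhalf : ∀ ε : ℝ, IsOpen (W ∩ {x | 0 < ε * (x k - p k)}) := fun ε =>
    hW.inter (isOpen_lt continuous_const (by fun_prop))
  have hsplit := D.additivity (affineWithCoord σ p k fun s => p k + r ^ 2 - (s - p k) ^ 2) W
    (W ∩ {x | 0 < 1 * (x k - p k)}) (W ∩ {x | 0 < -1 * (x k - p k)}) p hW hb (hhalf 1)
    (hhalf (-1)) inter_subset_left inter_subset_left ?_
    (continuous_affineWithCoord (by fun_prop)).continuousOn ?_
  · rw [D.deg_fold_eq_zero hW hb hσ hr0 hr, D.deg_fold_inter_half hW hb hc hσ hr0 hr (.inl rfl),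
      D.deg_fold_inter_half hW hb hc hσ hr0 hr (.inr rfl), neg_neg] at hsplit
    linarith
  · refine disjoint_left.2 fun x hx₁ hx₂ => ?_
    linarith [hx₁.2.out, hx₂.2.out]
  · rintro ⟨x, ⟨-, hx⟩, hfx⟩
    have hxk := ((affineWithCoord_eq_right_iff hσ).1 hfx).2
    have hxW : x ∈ W := mem_of_affineWithCoord_eq hσ hr hfx
      (abs_le_of_sq_le_sq (by linarith) hr0.le)
    have : (x k - p k - r) * (x k - p k + r) = 0 := by linarith
    rcases mul_eq_zero.1 this with h | h
    · exact hx (.inl ⟨hxW, by simp only [mem_ofPred_eq]; linarith⟩)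
    · exact hx (.inr ⟨hxW, by simp only [mem_ofPred_eq]; linarith⟩)

end FoldDegree

section SignFormula

open Function

variable {n : ℕ} (D : BrouwerDegree n) {W : Set (Fin n → ℝ)} {z p : Fin n → ℝ}

theorem BrouwerDegree.deg_signDiagAffine (hW : IsOpen W) (hb : Bornology.IsBounded W)
    (hc : Convex ℝ W) (s : Finset (Fin n)) (hz : z ∈ W) (hp : p ∈ W) :
    D.deg (fun x => (fun i => if i ∈ s then -1 else 1) * (x - z) + p) W p = (-1) ^ s.card := by
  rw [D.deg_diagAffine_center_congr hW hb hc (fun i => by split_ifs <;> norm_num) hz hp]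
  induction s using Finset.induction_on with
  | empty =>
    have hid : (fun x => (fun i => if i ∈ (∅ : Finset (Fin n)) then (-1 : ℝ) else 1) *
        (x - p) + p) = id := by
      ext x i; simp
    rw [hid, Finset.card_empty, pow_zero]
    exact (D.normalization W p hW hb (by rw [hW.frontier_eq]; exact fun h => h.2 hp)).2 hp
  | insert a s ha ih =>
    set σ : Fin n → ℝ := fun i => if i ∈ s then -1 else 1
    have hins : (fun i => if i ∈ insert a s then (-1 : ℝ) else 1) = update σ a (-1) := by
      ext i; by_cases hi : i = a <;> simp [σ, hi]
    have hself : σ = update σ a 1 := by simp [σ, ha]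
    have hσ : ∀ i, σ i ≠ 0 := fun i => by simp only [σ]; split_ifs <;> norm_num
    rw [hins, D.deg_diagAffine_update_neg_one hW hb hc (fun i _ => hσ i) hp, ← hself, ih,
      Finset.card_insert_of_notMem ha, pow_succ]
    ring

theorem BrouwerDegree.deg_constDiagAffine (hW : IsOpen W) (hb : Bornology.IsBounded W)
    (hc : Convex ℝ W) {ε : ℤ} (hε : ε = 1 ∨ ε = -1) (hz : z ∈ W) (hp : p ∈ W) :
    D.deg (fun x => (fun _ => (ε : ℝ)) * (x - z) + p) W p = ε ^ n := by
  rcases hε with rfl | rfl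
  · simpa using D.deg_signDiagAffine hW hb hc ∅ hz hp
  · simpa using D.deg_signDiagAffine hW hb hc Finset.univ hz hp

end SignFormula

section SquaringMap

variable {m : ℕ}

def squaringMap (x : Fin (m + 1) → ℝ) : Fin (m + 1) → ℝ := fun i =>
  if i = 0 then x 0 ^ 2 - ∑ j ∈ Finset.univ.erase 0, x j ^ 2 else 2 * x 0 * x i

theorem continuous_squaringMap : Continuous (squaringMap (m := m)) :=
  continuous_pi fun i => by unfold squaringMap; split_ifs <;> fun_prop

theorem eq_single_zero_iff {x : Fin (m + 1) → ℝ} :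
    x = Pi.single 0 (x 0) ↔ ∀ j ≠ 0, x j = 0 := by
  simp [Pi.single, Function.eq_update_iff]

theorem sum_sq_erase_zero_nonneg (x : Fin (m + 1) → ℝ) :
    0 ≤ ∑ j ∈ Finset.univ.erase 0, x j ^ 2 :=
  Finset.sum_nonneg fun _ _ => sq_nonneg _

theorem sum_sq_erase_zero_eq_zero_iff {x : Fin (m + 1) → ℝ} :
    ∑ j ∈ Finset.univ.erase 0, x j ^ 2 = 0 ↔ ∀ j ≠ 0, x j = 0 := by
  rw [Finset.sum_eq_zero_iff_of_nonneg fun _ _ => sq_nonneg _]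
  simp

theorem squaringMap_eq_single {x : Fin (m + 1) → ℝ} {a : ℝ} (ha : 0 ≤ a)
    (h : squaringMap x = Pi.single 0 a) : x = Pi.single 0 (x 0) ∧ x 0 ^ 2 = a := by
  have h0 : x 0 ^ 2 - ∑ j ∈ Finset.univ.erase 0, x j ^ 2 = a := by
    simpa [squaringMap] using congrFun h 0
  have hx : ∀ j ≠ 0, x j = 0 := by
    by_cases hx0 : x 0 = 0
    · rw [← sum_sq_erase_zero_eq_zero_iff]
      nlinarith [sum_sq_erase_zero_nonneg x]
    · intro j hj
      have := congrFun h j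
      simp only [squaringMap, hj, if_false, Pi.single_apply] at this
      simpa [hx0] using this
  rw [sum_sq_erase_zero_eq_zero_iff.2 hx, sub_zero] at h0
  exact ⟨eq_single_zero_iff.2 hx, h0⟩

theorem squaringMap_eq_zero_iff {x : Fin (m + 1) → ℝ} : squaringMap x = 0 ↔ x = 0 := by
  refine ⟨fun h => ?_, fun h => by ext i; simp [h, squaringMap]⟩
  obtain ⟨hx, hx0⟩ := squaringMap_eq_single le_rfl (h.trans (Pi.single_zero 0).symm)
  rwa [pow_eq_zero_iff two_ne_zero |>.1 hx0, Pi.single_zero] at hx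

theorem eq_single_of_squaringMap_segment_eq {x : Fin (m + 1) → ℝ} {ε t : ℝ}
    (hε : ε = 1 ∨ ε = -1) (ht : t ∈ Icc (0 : ℝ) 1) (hx0 : 0 ≤ ε * x 0) (hx1 : |x 0| ≤ 1)
    (h : (1 - t) • squaringMap x +
        t • ((fun _ => ε) * (x - Pi.single 0 (ε / 2)) + Pi.single 0 (1 / 4)) =
      Pi.single 0 (1 / 4)) :
    x = Pi.single 0 (x 0) ∧ 0 < ε * x 0 ∧ ε * x 0 < 1 := by
  have hε2 : ε * ε = 1 := by rcases hε with rfl | rfl <;> norm_num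
  set S := ∑ j ∈ Finset.univ.erase 0, x j ^ 2
  set y := ε * x 0
  have hy : |y| ≤ 1 := by rcases hε with rfl | rfl <;> simpa [y] using hx1
  have h0 : (1 - t) * (x 0 ^ 2 - S) + t * (ε * (x 0 - ε / 2) + 1 / 4) = 1 / 4 := by
    have := congrFun h 0
    simp only [Pi.add_apply, Pi.smul_apply, smul_eq_mul, Pi.mul_apply, Pi.sub_apply,
      Pi.single_eq_same, squaringMap, if_true] at this
    linarith
  have hj : ∀ j ≠ 0, (1 - t) * (2 * x 0 * x j) + t * (ε * x j) = 0 := fun j hj => by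
    simpa [squaringMap, hj, Pi.single_apply] using congrFun h j
  have hxj : ∀ j ≠ 0, x j = 0 := by
    intro j hj0
    have hfac : x j * ((1 - t) * (2 * y) + t) = 0 := by
      linear_combination ε * hj j hj0 - t * x j * hε2
    refine (mul_eq_zero.1 hfac).resolve_right fun hz => ?_
    have ht0 : t = 0 := by nlinarith [ht.1, ht.2]
    have hx00 : x 0 = 0 := by
      subst ht0
      linear_combination ε * hz / 2 - x 0 * hε2
    subst ht0
    rw [hx00] at h0
    nlinarith [sum_sq_erase_zero_nonneg x]
  have hS : S = 0 := sum_sq_erase_zero_eq_zero_iff.2 hxj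
  rw [hS] at h0
  have h0' : (1 - t) * y ^ 2 + t * (y - 1 / 4) = 1 / 4 := by
    linear_combination h0 + ((1 - t) * x 0 ^ 2 + t / 2) * hε2
  have hy' := abs_le.1 hy
  refine ⟨eq_single_zero_iff.2 hxj, ?_, ?_⟩
  · nlinarith [ht.1, ht.2]
  · by_contra hy1
    rw [le_antisymm hy'.2 (not_lt.1 hy1)] at h0'
    linarith [ht.2]

end SquaringMap

section SquaringMapDegree

open Metric

variable {m : ℕ} (D : BrouwerDegree (m + 1))

theorem BrouwerDegree.deg_squaringMap_half {ε : ℤ} (hε : ε = 1 ∨ ε = -1) :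
    D.deg squaringMap (ball 0 1 ∩ {x | 0 < (ε : ℝ) * x 0}) (Pi.single 0 (1 / 4)) =
      ε ^ (m + 1) := by
  have hε' : (ε : ℝ) = 1 ∨ (ε : ℝ) = -1 := by rcases hε with rfl | rfl <;> norm_num
  have hε2 : (ε : ℝ) * ε = 1 := by rcases hε' with h | h <;> rw [h] <;> norm_num
  set H := ball (0 : Fin (m + 1) → ℝ) 1 ∩ {x | 0 < (ε : ℝ) * x 0}
  set q : Fin (m + 1) → ℝ := Pi.single 0 (ε / 2)
  set p : Fin (m + 1) → ℝ := Pi.single 0 (1 / 4)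
  have hH : IsOpen H := isOpen_ball.inter (isOpen_lt continuous_const (by fun_prop))
  have hclH : closure H ⊆ closedBall 0 1 ∩ {x | 0 ≤ (ε : ℝ) * x 0} :=
    (closure_inter_subset_inter_closure _ _).trans (inter_subset_inter
      (closure_ball 0 one_ne_zero).le (closure_lt_subset_le continuous_const (by fun_prop)))
  have hqH : q ∈ H := by
    refine ⟨?_, ?_⟩
    · rcases hε' with h | h <;> simp [q, Pi.norm_single, h] <;> norm_num
    · simp only [q, mem_ofPred_eq, Pi.single_eq_same]; nlinarith
  set g : (Fin (m + 1) → ℝ) → (Fin (m + 1) → ℝ) := fun x => (fun _ => (ε : ℝ)) * (x - q) + p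
  have hg : Continuous g := by fun_prop
  have hpB : p ∈ ball (0 : Fin (m + 1) → ℝ) 1 := by simp [p, Pi.norm_single]; norm_num
  calc D.deg squaringMap H p
      = D.deg g H p := by
        refine D.deg_eq_of_segment_homotopy hH (isBounded_ball.subset inter_subset_left)
          continuous_squaringMap.continuousOn hg.continuousOn fun t ht x hx h => ?_
        obtain ⟨hx1, hx0⟩ := hclH hx
        have hx01 : |x 0| ≤ 1 :=
          (norm_le_pi_norm x 0).trans (mem_closedBall_zero_iff.1 hx1)
        obtain ⟨hxs, hpos, hlt⟩ := eq_single_of_squaringMap_segment_eq hε' ht hx0 hx01 h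
        have habs : |x 0| = |(ε : ℝ) * x 0| := by
          rw [abs_mul]; rcases hε' with h | h <;> simp [h]
        refine ⟨?_, hpos⟩
        rw [hxs, mem_ball_zero_iff, Pi.norm_single, Real.norm_eq_abs, habs, abs_of_pos hpos]
        exact hlt
    _ = D.deg g (ball 0 1) p :=
        (D.deg_excision isOpen_ball isBounded_ball hH inter_subset_left hg.continuousOn
          fun x _ hx => (mul_sub_add_eq_right_iff (fun _ => by
            rcases hε' with h | h <;> rw [h] <;> norm_num)).1 hx ▸ hqH).symm
    _ = ε ^ (m + 1) :=
        D.deg_constDiagAffine isOpen_ball isBounded_ball (convex_ball 0 1) hε hqH.1 hpB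

theorem BrouwerDegree.deg_squaringMap_ball_zero_eq :
    D.deg squaringMap (ball 0 1) 0 = D.deg squaringMap (ball 0 1) (Pi.single 0 (1 / 4)) := by
  refine D.locConst squaringMap _ _ _ isOpen_ball isBounded_ball
    continuous_squaringMap.continuousOn
    ((fun s : ℝ => (Pi.single 0 s : Fin (m + 1) → ℝ)) '' Icc 0 (1 / 4))
    ((isConnected_Icc (by norm_num)).image _
      (continuous_single (A := fun _ : Fin (m + 1) => ℝ) 0).continuousOn) ?_
    ⟨0, by simp⟩ ⟨1 / 4, by simp⟩
  rintro _ ⟨s, hs, rfl⟩ ⟨x, hx, hxs⟩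
  rw [frontier_ball 0 one_ne_zero, mem_sphere_zero_iff_norm] at hx
  obtain ⟨hx0, hsq⟩ := squaringMap_eq_single hs.1 hxs
  rw [hx0, Pi.norm_single, Real.norm_eq_abs] at hx
  nlinarith [sq_abs (x 0), hs.2]

theorem BrouwerDegree.deg_squaringMap_ball_single :
    D.deg squaringMap (ball 0 1) (Pi.single 0 (1 / 4)) = 1 + (-1) ^ (m + 1) := by
  have hhalf : ∀ ε : ℤ, IsOpen (ball (0 : Fin (m + 1) → ℝ) 1 ∩ {x | 0 < (ε : ℝ) * x 0}) :=
    fun ε => isOpen_ball.inter (isOpen_lt continuous_const (by fun_prop))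
  have hsplit := D.additivity squaringMap (ball 0 1) _ _ (Pi.single 0 (1 / 4)) isOpen_ball
    isBounded_ball (hhalf 1) (hhalf (-1)) inter_subset_left inter_subset_left ?_
    continuous_squaringMap.continuousOn ?_
  · rwa [D.deg_squaringMap_half (.inl rfl), D.deg_squaringMap_half (.inr rfl), one_pow] at hsplit
  · refine disjoint_left.2 fun x hx₁ hx₂ => ?_
    have h₁ := hx₁.2.out
    have h₂ := hx₂.2.out
    push_cast at h₁ h₂
    linarith
  · rintro ⟨x, ⟨-, hx⟩, hfx⟩
    obtain ⟨hx0, hsq⟩ := squaringMap_eq_single (by norm_num) hfx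
    have hxB : x ∈ ball (0 : Fin (m + 1) → ℝ) 1 := by
      rw [hx0, mem_ball_zero_iff, Pi.norm_single, Real.norm_eq_abs]
      nlinarith [sq_abs (x 0), abs_nonneg (x 0)]
    have : (x 0 - 1 / 2) * (x 0 + 1 / 2) = 0 := by linear_combination hsq
    rcases mul_eq_zero.1 this with h | h
    · exact hx (.inl ⟨hxB, by simp only [mem_ofPred_eq]; push_cast; linarith⟩)
    · exact hx (.inr ⟨hxB, by simp only [mem_ofPred_eq]; push_cast; linarith⟩)

end SquaringMapDegree

/-- Example 2: for `f₁ = x₁² − x₂² − ⋯ − xₙ²`, `fⱼ = 2x₁xⱼ` (j ≥ 2),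
the origin is the unique zero of `f` in `[−1,1]ⁿ`, `0 ∉ f(∂[−1,1]ⁿ)`, and
`deg(f, (−1,1)ⁿ, 0)` is `2` for `n` even and `0` for `n` odd. -/
theorem stmt16 {m : ℕ} (D : BrouwerDegree (m + 1))
    (f : (Fin (m + 1) → ℝ) → (Fin (m + 1) → ℝ))
    (hf1 : ∀ x, f x 0 = x 0 ^ 2 - ∑ j ∈ Finset.univ.erase (0 : Fin (m + 1)), x j ^ 2)
    (hf2 : ∀ x, ∀ j : Fin (m + 1), j ≠ 0 → f x j = 2 * x 0 * x j) :
    (∀ x : Fin (m + 1) → ℝ, (∀ i, x i ∈ Set.Icc (-1 : ℝ) 1) → (f x = 0 ↔ x = 0)) ∧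
    (∀ x ∈ frontier {y : Fin (m + 1) → ℝ | ∀ i, y i ∈ Set.Ioo (-1 : ℝ) 1}, f x ≠ 0) ∧
    D.deg f {y | ∀ i, y i ∈ Set.Ioo (-1 : ℝ) 1} 0 =
      if (m + 1) % 2 = 0 then 2 else 0 := by
  obtain rfl : f = squaringMap := funext fun x => funext fun i => by
    by_cases hi : i = 0
    · subst hi; simp [squaringMap, hf1]
    · simp [squaringMap, hi, hf2 x i hi]
  have hcube : {y : Fin (m + 1) → ℝ | ∀ i, y i ∈ Ioo (-1 : ℝ) 1} = Metric.ball 0 1 := by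
    ext y; simp [pi_norm_lt_iff, abs_lt]
  rw [hcube, frontier_ball 0 one_ne_zero]
  refine ⟨fun x _ => squaringMap_eq_zero_iff, fun x hx h => ?_, ?_⟩
  · simp [squaringMap_eq_zero_iff.1 h] at hx
  · rw [D.deg_squaringMap_ball_zero_eq, D.deg_squaringMap_ball_single]
    split_ifs with h
    · rw [Even.neg_one_pow (Nat.even_iff.2 h)]; rfl
    · rw [Odd.neg_one_pow (Nat.odd_iff.2 (by omega))]; rfl
end
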